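/- arXiv:1306.0122 — 8 statements merged into one kernel-verified Lean document; each statement's English description precedes it below -/
import Mathlib

section
/- Let R > 0 and let φ ∈ C_c^∞(ℝ³) satisfy 0 ≤ φ ≤ 1, φ ≡ 1 on the ball B_R(0), and φ ≡ 0 outside B_{2R}(0). Then there exists C > 0 such that for all δ ∈ (0,1], ∫_{ℝ³ \ B_R(0)} |∇(φ·w_δ)(z)|² dz ≤ C·δ^{1/2}. -/
set_option maxHeartbeats 1000000
set_option synthInstance.maxHeartbeats 1000000

open MeasureTheory Real Set Filter Topology Metric

noncomputable section

abbrev E3 := EuclideanSpace ℝ (Fin 3)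

/-- The Aubin–Talenti bubble `w_δ(z) = (3δ)^{1/4} (δ + |z|²)^{-1/2}`. -/
def wbub (δ : ℝ) (z : E3) : ℝ := (3 * δ) ^ ((1:ℝ) / 4) * (δ + ‖z‖ ^ 2) ^ (-(1:ℝ) / 2)

lemma rpow_neg_anti {a b p : ℝ} (ha : 0 < a) (hab : a ≤ b) (hp : p ≤ 0) :
    b ^ p ≤ a ^ p :=
  Real.rpow_le_rpow_of_nonpos ha hab hp

lemma wbub_hasFDerivAt (δ : ℝ) (hδ : 0 < δ) (z : E3) :
    HasFDerivAt (wbub δ)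
      (((3 * δ) ^ ((1:ℝ) / 4) * (-(1:ℝ) / 2 * (δ + ‖z‖ ^ 2) ^ (-(1:ℝ) / 2 - 1))) •
        (2 • innerSL ℝ z)) z := by
  have h1 : HasFDerivAt (fun y : E3 => ‖y‖ ^ 2) (2 • innerSL ℝ z) z :=
    (hasStrictFDerivAt_norm_sq z).hasFDerivAt
  have h2 : HasFDerivAt (fun y : E3 => δ + ‖y‖ ^ 2) (2 • innerSL ℝ z) z :=
    h1.const_add δ
  have hpos : 0 < δ + ‖z‖ ^ 2 := by positivity
  have h3 := h2.rpow_const (p := -(1:ℝ) / 2) (Or.inl hpos.ne')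
  have h4 := h3.const_mul ((3 * δ) ^ ((1:ℝ) / 4))
  have : wbub δ = fun y : E3 => (3 * δ) ^ ((1:ℝ) / 4) * (δ + ‖y‖ ^ 2) ^ (-(1:ℝ) / 2) := rfl
  rw [this]
  exact h4.congr_fderiv (smul_smul _ _ _)

theorem truncated_bubble_gradient_tail
    (R : ℝ) (hR : 0 < R)
    (φ : E3 → ℝ) (hφsmooth : ContDiff ℝ (⊤ : ℕ∞) φ) (hφsupp : HasCompactSupport φ)
    (hφ01 : ∀ z, φ z ∈ Icc (0:ℝ) 1)
    (hφ1 : ∀ z ∈ ball (0:E3) R, φ z = 1)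
    (hφ0 : ∀ z ∉ ball (0:E3) (2 * R), φ z = 0) :
    ∃ C > (0:ℝ), ∀ δ ∈ Ioc (0:ℝ) 1,
      (∫ z in (ball (0:E3) R)ᶜ, ‖gradient (fun y => φ y * wbub δ y) z‖ ^ 2)
        ≤ C * δ ^ ((1:ℝ) / 2) := by
  -- bound on the gradient of φ
  obtain ⟨M₀, hM₀⟩ := (hφsupp.fderiv ℝ).exists_bound_of_continuous
    (hφsmooth.continuous_fderiv (by simp))
  set M : ℝ := max M₀ 0 with hMdef
  have hM : ∀ x, ‖fderiv ℝ φ x‖ ≤ M := fun x => (hM₀ x).trans (le_max_left _ _)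
  have hMnn : 0 ≤ M := le_max_right _ _
  set K : ℝ := M / R + 2 / R ^ 2 with hKdef
  have hKnn : 0 ≤ K := by positivity
  set V : ℝ := (volume (closedBall (0:E3) (2 * R))).toReal with hVdef
  have hVnn : 0 ≤ V := ENNReal.toReal_nonneg
  refine ⟨(3:ℝ) ^ ((1:ℝ)/2) * (K + 1) ^ 2 * (V + 1), by positivity, ?_⟩
  rintro δ ⟨hδ0, hδ1⟩
  set g : E3 → ℝ := fun y => φ y * wbub δ y with hgdef
  set A : Set E3 := closedBall (0:E3) (2 * R) \ ball (0:E3) R with hAdef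
  have hφd : Differentiable ℝ φ := hφsmooth.differentiable (by simp)
  -- the integrand vanishes outside the closed ball of radius 2R
  have hzero : ∀ z ∈ (ball (0:E3) R)ᶜ \ A, ‖gradient g z‖ ^ 2 = 0 := by
    intro z hz
    have hz2 : z ∉ closedBall (0:E3) (2 * R) := by
      intro h
      exact hz.2 ⟨h, hz.1⟩
    have hopen : IsOpen ((closedBall (0:E3) (2 * R))ᶜ) := isClosed_closedBall.isOpen_compl
    have hev : g =ᶠ[𝓝 z] (fun _ => (0:ℝ)) := by
      filter_upwards [hopen.mem_nhds hz2] with y hy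
      have : y ∉ ball (0:E3) (2 * R) := fun h => hy (ball_subset_closedBall h)
      simp [hgdef, hφ0 y this]
    have hf0 : fderiv ℝ g z = 0 := by
      rw [hev.fderiv_eq]; exact fderiv_const_apply 0
    have : ‖gradient g z‖ = 0 := by
      rw [gradient, hf0]
      simp
    rw [this]; ring
  have hAsub : A ⊆ (ball (0:E3) R)ᶜ := fun z hz => hz.2
  have hsplit : (∫ z in (ball (0:E3) R)ᶜ, ‖gradient g z‖ ^ 2)
      = ∫ z in A, ‖gradient g z‖ ^ 2 :=
    setIntegral_eq_of_subset_of_forall_diff_eq_zero measurableSet_ball.compl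
      hAsub hzero
  rw [hsplit]
  -- pointwise bound on the annulus
  set c : ℝ := (3 * δ) ^ ((1:ℝ)/4) with hcdef
  have hcpos : 0 < c := Real.rpow_pos_of_pos (by linarith) _
  have hcsq : c ^ 2 = 3 ^ ((1:ℝ)/2) * δ ^ ((1:ℝ)/2) := by
    rw [hcdef, ← Real.rpow_natCast ((3*δ) ^ ((1:ℝ)/4)) 2, ← Real.rpow_mul (by positivity)]
    norm_num
    rw [Real.mul_rpow (by norm_num) hδ0.le]
  have hbound : ∀ z ∈ A, ‖gradient g z‖ ^ 2 ≤ 3 ^ ((1:ℝ)/2) * K ^ 2 * δ ^ ((1:ℝ)/2) := by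
    intro z hz
    have hzR : R ≤ ‖z‖ := by
      have := hz.2
      rw [mem_ball, dist_zero_right, not_lt] at this
      exact this
    have hz2R : ‖z‖ ≤ 2 * R := by
      have := hz.1
      rwa [mem_closedBall, dist_zero_right] at this
    have hh : R ^ 2 ≤ δ + ‖z‖ ^ 2 := by
      nlinarith
    have hR2 : (0:ℝ) < R ^ 2 := by positivity
    have hb1 : (δ + ‖z‖ ^ 2) ^ (-(1:ℝ)/2) ≤ R⁻¹ := by
      have h1 : (δ + ‖z‖ ^ 2) ^ (-(1:ℝ)/2) ≤ (R ^ 2) ^ (-(1:ℝ)/2) :=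
        rpow_neg_anti hR2 hh (by norm_num)
      have h2 : ((R:ℝ) ^ 2) ^ (-(1:ℝ)/2) = R⁻¹ := by
        rw [← Real.rpow_natCast R 2, ← Real.rpow_mul hR.le]
        norm_num
        exact Real.rpow_neg_one R
      linarith [h2 ▸ h1]
    have hb2 : (δ + ‖z‖ ^ 2) ^ (-(1:ℝ)/2 - 1) ≤ (R ^ 3)⁻¹ := by
      have h1 : (δ + ‖z‖ ^ 2) ^ (-(1:ℝ)/2 - 1) ≤ (R ^ 2) ^ (-(1:ℝ)/2 - 1) :=
        rpow_neg_anti hR2 hh (by norm_num)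
      have h2 : ((R:ℝ) ^ 2) ^ (-(1:ℝ)/2 - 1) = (R ^ 3)⁻¹ := by
        rw [← Real.rpow_natCast R 2, ← Real.rpow_mul hR.le, ← Real.rpow_natCast R 3,
          ← Real.rpow_neg hR.le]
        norm_num
      linarith [h2 ▸ h1]
    -- derivative of the product
    set W' := ((3 * δ) ^ ((1:ℝ) / 4) * (-(1:ℝ) / 2 * (δ + ‖z‖ ^ 2) ^ (-(1:ℝ) / 2 - 1))) •
        (2 • innerSL ℝ z) with hWdef
    have hw := wbub_hasFDerivAt δ hδ0 z
    have hprod : HasFDerivAt g (φ z • W' + wbub δ z • fderiv ℝ φ z) z :=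
      (hφd z).hasFDerivAt.mul hw
    have hgrad : ‖gradient g z‖ = ‖φ z • W' + wbub δ z • fderiv ℝ φ z‖ := by
      rw [gradient, hprod.fderiv]
      exact LinearIsometryEquiv.norm_map _ _
    -- bound ‖W'‖
    have hinner : ‖(2 • innerSL ℝ z : E3 →L[ℝ] ℝ)‖ ≤ 2 * ‖z‖ := by
      rw [two_smul]
      calc ‖(innerSL ℝ z : E3 →L[ℝ] ℝ) + innerSL ℝ z‖
          ≤ ‖(innerSL ℝ z : E3 →L[ℝ] ℝ)‖ + ‖(innerSL ℝ z : E3 →L[ℝ] ℝ)‖ := norm_add_le _ _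
        _ = 2 * ‖z‖ := by rw [innerSL_apply_norm]; ring
    have hfac : |(3 * δ) ^ ((1:ℝ) / 4) * (-(1:ℝ) / 2 * (δ + ‖z‖ ^ 2) ^ (-(1:ℝ) / 2 - 1))|
        = c * (1/2 * (δ + ‖z‖ ^ 2) ^ (-(1:ℝ) / 2 - 1)) := by
      rw [abs_mul, abs_of_nonneg hcpos.le, abs_mul]
      have : 0 ≤ (δ + ‖z‖ ^ 2) ^ (-(1:ℝ) / 2 - 1) := Real.rpow_nonneg (by positivity) _
      rw [abs_of_nonneg this]
      norm_num
    have hW : ‖W'‖ ≤ c * (2 / R ^ 2) := by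
      rw [hWdef]
      refine le_trans (norm_smul_le ((3 * δ) ^ ((1:ℝ) / 4) *
        (-(1:ℝ) / 2 * (δ + ‖z‖ ^ 2) ^ (-(1:ℝ) / 2 - 1)))
        (2 • innerSL ℝ z : E3 →L[ℝ] ℝ)) ?_
      rw [Real.norm_eq_abs, hfac]
      calc c * (1/2 * (δ + ‖z‖ ^ 2) ^ (-(1:ℝ) / 2 - 1)) * ‖(2 • innerSL ℝ z : E3 →L[ℝ] ℝ)‖
          ≤ c * (1/2 * (R ^ 3)⁻¹) * (2 * (2 * R)) := by
            refine mul_le_mul ?_ (hinner.trans (by linarith)) (norm_nonneg _) (by positivity)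
            exact mul_le_mul_of_nonneg_left
              (mul_le_mul_of_nonneg_left hb2 (by norm_num)) hcpos.le
        _ = c * (2 * R / R ^ 3) := by ring
        _ = c * (2 / R ^ 2) := by
            congr 1
            field_simp
    -- bound wbub
    have hwb0 : 0 ≤ wbub δ z := by
      unfold wbub
      positivity
    have hwb : wbub δ z ≤ c * R⁻¹ := by
      unfold wbub
      exact mul_le_mul_of_nonneg_left hb1 hcpos.le
    have hφz : |φ z| ≤ 1 := by
      rcases hφ01 z with ⟨h0, h1⟩
      rw [abs_of_nonneg h0]; exact h1
    have t1 : ‖φ z • W'‖ ≤ 1 * (c * (2 / R ^ 2)) := by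
      refine le_trans (norm_smul_le (φ z) W') ?_
      have h1 : ‖φ z‖ ≤ 1 := by rw [Real.norm_eq_abs]; exact hφz
      exact mul_le_mul h1 hW (norm_nonneg _) zero_le_one
    have t2 : ‖wbub δ z • fderiv ℝ φ z‖ ≤ (c * R⁻¹) * M := by
      refine le_trans (norm_smul_le (wbub δ z) (fderiv ℝ φ z)) ?_
      have h1 : ‖wbub δ z‖ ≤ c * R⁻¹ := by
        rw [Real.norm_eq_abs, abs_of_nonneg hwb0]; exact hwb
      exact mul_le_mul h1 (hM z) (norm_nonneg _) (by positivity)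
    have hmain : ‖φ z • W' + wbub δ z • fderiv ℝ φ z‖ ≤ c * K := by
      calc ‖φ z • W' + wbub δ z • fderiv ℝ φ z‖
          ≤ ‖φ z • W'‖ + ‖wbub δ z • fderiv ℝ φ z‖ := norm_add_le _ _
        _ ≤ 1 * (c * (2 / R ^ 2)) + (c * R⁻¹) * M := add_le_add t1 t2
        _ = c * K := by rw [hKdef]; field_simp; ring
    calc ‖gradient g z‖ ^ 2 ≤ (c * K) ^ 2 := by
          rw [hgrad]
          exact pow_le_pow_left₀ (norm_nonneg _) hmain 2
      _ = c ^ 2 * K ^ 2 := by ring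
      _ = 3 ^ ((1:ℝ)/2) * K ^ 2 * δ ^ ((1:ℝ)/2) := by rw [hcsq]; ring
  -- integrate the bound
  have hAfin : volume A < ⊤ :=
    lt_of_le_of_lt (measure_mono diff_subset) measure_closedBall_lt_top
  have hAmeas : MeasurableSet A := measurableSet_closedBall.diff measurableSet_ball
  have hδr : (0:ℝ) ≤ δ ^ ((1:ℝ)/2) := Real.rpow_nonneg hδ0.le _
  have hineq := norm_setIntegral_le_of_norm_le_const (μ := volume) (s := A)
    (f := fun z => ‖gradient g z‖ ^ 2) hAfin (fun x hx => by
      rw [Real.norm_of_nonneg (by positivity)]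
      exact hbound x hx)
  have hVA : (volume A).toReal ≤ V := by
    rw [hVdef]
    exact ENNReal.toReal_mono measure_closedBall_lt_top.ne (measure_mono diff_subset)
  calc (∫ z in A, ‖gradient g z‖ ^ 2)
      ≤ ‖∫ z in A, ‖gradient g z‖ ^ 2‖ := le_abs_self _
    _ ≤ 3 ^ ((1:ℝ)/2) * K ^ 2 * δ ^ ((1:ℝ)/2) * (volume A).toReal := hineq
    _ ≤ 3 ^ ((1:ℝ)/2) * (K + 1) ^ 2 * δ ^ ((1:ℝ)/2) * (V + 1) := by
        have h1 : K ^ 2 ≤ (K + 1) ^ 2 := by nlinarith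
        have h2 : (volume A).toReal ≤ V + 1 := by linarith
        have h3 : (0:ℝ) ≤ 3 ^ ((1:ℝ)/2) := Real.rpow_nonneg (by norm_num) _
        have h4 : (0:ℝ) ≤ (volume A).toReal := ENNReal.toReal_nonneg
        have e1 : 3 ^ ((1:ℝ)/2) * K ^ 2 * δ ^ ((1:ℝ)/2)
            ≤ 3 ^ ((1:ℝ)/2) * (K + 1) ^ 2 * δ ^ ((1:ℝ)/2) :=
          mul_le_mul_of_nonneg_right (mul_le_mul_of_nonneg_left h1 h3) hδr
        exact mul_le_mul e1 h2 h4 (by positivity)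
    _ = 3 ^ ((1:ℝ)/2) * (K + 1) ^ 2 * (V + 1) * δ ^ ((1:ℝ)/2) := by ring
end
end

section
/- Let f : ℝ → ℝ satisfy f(s) = 0 for s ≤ 0, f continuous on ℝ, (f1) f(s)/s³ → 0 as s → 0⁺, and (f2) s ↦ f(s)/s³ strictly increasing on (0,∞). Then for every s > 0, 0 < 4F(s) ≤ f(s)·s, where F(s) = ∫₀^s f(τ) dτ. -/
open MeasureTheory Real Set Filter Topology Metric

noncomputable section

/-- `F(s) = ∫₀ˢ f(τ) dτ`. -/
def Fint (f : ℝ → ℝ) (s : ℝ) : ℝ := ∫ τ in (0:ℝ)..s, f τ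

theorem ambrosetti_rabinowitz_condition
    (f : ℝ → ℝ) (hf0 : ∀ s ≤ (0:ℝ), f s = 0) (hfc : Continuous f)
    (hf1 : Tendsto (fun s => f s / s ^ 3) (𝓝[>] 0) (𝓝 0))
    (hf2 : StrictMonoOn (fun s => f s / s ^ 3) (Ioi 0)) :
    ∀ s > (0:ℝ), 0 < 4 * Fint f s ∧ 4 * Fint f s ≤ f s * s := by
  have hge : ∀ t > (0:ℝ), 0 ≤ f t / t ^ 3 := by
    intro t ht
    refine le_of_tendsto hf1 ?_
    filter_upwards [Ioo_mem_nhdsGT_of_mem (⟨le_rfl, ht⟩ : (0:ℝ) ∈ Ico (0:ℝ) t)]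
      with u hu
    exact (hf2 hu.1 ht hu.2).le
  have hgpos : ∀ t > (0:ℝ), 0 < f t / t ^ 3 := by
    intro t ht
    have h1 : (0:ℝ) < t / 2 := by linarith
    calc (0:ℝ) ≤ f (t/2) / (t/2) ^ 3 := hge _ h1
      _ < f t / t ^ 3 := hf2 h1 ht (by linarith)
  have hfpos : ∀ t > (0:ℝ), 0 < f t := by
    intro t ht
    have h3 : (0:ℝ) < t ^ 3 := by positivity
    have := mul_pos (hgpos t ht) h3
    rwa [div_mul_cancel₀ _ (ne_of_gt h3)] at this
  intro s hs
  have hint : IntervalIntegrable f volume 0 s := hfc.intervalIntegrable 0 s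
  have hpos : 0 < Fint f s :=
    intervalIntegral.intervalIntegral_pos_of_pos_on hint
      (fun x hx => hfpos x hx.1) hs
  have hs3 : (0:ℝ) < s ^ 3 := by positivity
  have hmono : Fint f s ≤ ∫ τ in (0:ℝ)..s, (f s / s ^ 3) * τ ^ 3 := by
    refine intervalIntegral.integral_mono_on hs.le hint
      ((continuous_const.mul (continuous_pow 3)).intervalIntegrable 0 s) ?_
    intro x hx
    rcases eq_or_lt_of_le hx.1 with h | h
    · rw [← h, hf0 0 le_rfl]; simp
    · have hle : f x / x ^ 3 ≤ f s / s ^ 3 := hf2.monotoneOn h hs hx.2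
      have hx3 : (0:ℝ) < x ^ 3 := by positivity
      calc f x = (f x / x ^ 3) * x ^ 3 := by field_simp
        _ ≤ (f s / s ^ 3) * x ^ 3 :=
          mul_le_mul_of_nonneg_right hle hx3.le
  have hval : (∫ τ in (0:ℝ)..s, (f s / s ^ 3) * τ ^ 3) = f s * s / 4 := by
    rw [intervalIntegral.integral_const_mul, integral_pow]
    field_simp
    ring
  constructor
  · linarith
  · rw [hval] at hmono; linarith
end
end

section
/- Let f : ℝ → ℝ satisfy f(s) = 0 for s ≤ 0, f continuous, (f1) f(s)/s³ → 0 as s → 0⁺, and (f2) s ↦ f(s)/s³ strictly increasing on (0,∞). Let α > 0, k > 2, and let a' > 0 satisfy f(a') + (a')⁵ = (α/k)·a'. Define f̃ : ℝ → ℝ by f̃(s) = f(s) + (max(s,0))⁵ for s ≤ a' and f̃(s) = (α/k)·s for s > a', and set F̃(s) := ∫₀^s f̃(τ) dτ. Then for every s > 0: 0 < 2·F̃(s) ≤ f̃(s)·s ≤ (α/k)·s². -/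
open MeasureTheory Real Set Filter Topology Metric

noncomputable section

theorem truncated_nonlinearity_bounds
    (f : ℝ → ℝ) (hf0 : ∀ s ≤ (0:ℝ), f s = 0) (hfc : Continuous f)
    (hf1 : Tendsto (fun s => f s / s ^ 3) (𝓝[>] 0) (𝓝 0))
    (hf2 : StrictMonoOn (fun s => f s / s ^ 3) (Ioi 0))
    (α k a' : ℝ) (hα : 0 < α) (hk : 2 < k) (ha' : 0 < a')
    (heq : f a' + a' ^ 5 = α / k * a')
    (ftil : ℝ → ℝ)
    (hftil : ∀ s : ℝ, ftil s = if s ≤ a' then f s + (max s 0) ^ 5 else α / k * s)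
    (Ftil : ℝ → ℝ) (hFtil : ∀ s : ℝ, Ftil s = ∫ τ in (0:ℝ)..s, ftil τ) :
    ∀ s > (0:ℝ), 0 < 2 * Ftil s ∧ 2 * Ftil s ≤ ftil s * s ∧ ftil s * s ≤ α / k * s ^ 2 := by
  have hk0 : (0:ℝ) < k := lt_trans two_pos hk
  have hαk : 0 < α / k := div_pos hα hk0
  -- ratio nonneg
  have hr0 : ∀ t, 0 < t → 0 ≤ f t / t ^ 3 := by
    intro t ht
    refine le_of_tendsto hf1 ?_
    filter_upwards [Ioo_mem_nhdsGT_of_mem (left_mem_Ico.mpr ht)] with u hu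
    exact (hf2 hu.1 (mem_Ioi.mpr ht) hu.2).le
  have hfnn : ∀ t, 0 < t → 0 ≤ f t := by
    intro t ht
    have h3 : (0:ℝ) < t ^ 3 := pow_pos ht 3
    have := mul_nonneg (hr0 t ht) h3.le
    rwa [div_mul_cancel₀ _ h3.ne'] at this
  -- continuity of ftil
  have hfeq : ftil = fun x => if x ≤ a' then f x + max x 0 ^ 5 else α / k * x :=
    funext hftil
  have hcont : Continuous ftil := by
    rw [hfeq]
    refine Continuous.if_le ?_ ?_ continuous_id continuous_const ?_
    · exact hfc.add ((continuous_id.max continuous_const).pow 5)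
    · exact continuous_const.mul continuous_id
    · intro x hx
      subst hx
      rw [max_eq_left ha'.le, heq]
  -- value on (0, a']
  have hval : ∀ t, 0 < t → t ≤ a' → ftil t = f t + t ^ 5 := by
    intro t ht hta
    rw [hftil, if_pos hta, max_eq_left ht.le]
  have hzero : ftil 0 = 0 := by
    rw [hftil, if_pos ha'.le, hf0 0 le_rfl, max_self]
    norm_num
  have hpos : ∀ t, 0 < t → 0 < ftil t := by
    intro t ht
    rcases le_or_gt t a' with h | h
    · rw [hval t ht h]
      have : (0:ℝ) < t ^ 5 := pow_pos ht 5
      linarith [hfnn t ht]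
    · rw [hftil, if_neg (not_le.mpr h)]
      exact mul_pos hαk ht
  -- ratio bound on (0, a']
  have hq : ∀ t, 0 < t → t ≤ a' → ftil t / t ≤ α / k := by
    intro t ht hta
    have h3 : (0:ℝ) < t ^ 3 := pow_pos ht 3
    have ha3 : (0:ℝ) < a' ^ 3 := pow_pos ha' 3
    have hrm : f t / t ^ 3 ≤ f a' / a' ^ 3 :=
      hf2.monotoneOn (mem_Ioi.mpr ht) (mem_Ioi.mpr ha') hta
    have hsq : t ^ 2 ≤ a' ^ 2 := pow_le_pow_left₀ ht.le hta 2
    have hmul : f t / t ^ 3 * t ^ 2 ≤ f a' / a' ^ 3 * a' ^ 2 :=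
      mul_le_mul hrm hsq (sq_nonneg t) (hr0 a' ha')
    have h4 : t ^ 4 ≤ a' ^ 4 := pow_le_pow_left₀ ht.le hta 4
    have key : f t / t + t ^ 4 ≤ f a' / a' + a' ^ 4 := by
      have e1 : f t / t = f t / t ^ 3 * t ^ 2 := by
        field_simp
      have e2 : f a' / a' = f a' / a' ^ 3 * a' ^ 2 := by
        field_simp
      rw [e1, e2]; linarith
    have hend : f a' / a' + a' ^ 4 = α / k := by
      have e : f a' / a' + a' ^ 4 = (f a' + a' ^ 5) / a' := by field_simp
      rw [e, heq, mul_div_assoc, div_self ha'.ne', mul_one]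
    rw [hval t ht hta]
    rw [add_div]
    have : t ^ 5 / t = t ^ 4 := by
      field_simp
    rw [this]
    linarith
  -- ratio monotone
  have hqm : ∀ t u, 0 < t → t ≤ u → ftil t / t ≤ ftil u / u := by
    intro t u ht htu
    have hu : 0 < u := lt_of_lt_of_le ht htu
    rcases le_or_gt u a' with h | h
    · have hta : t ≤ a' := le_trans htu h
      have h3 : (0:ℝ) < t ^ 3 := pow_pos ht 3
      have hu3 : (0:ℝ) < u ^ 3 := pow_pos hu 3
      have hrm : f t / t ^ 3 ≤ f u / u ^ 3 :=
        hf2.monotoneOn (mem_Ioi.mpr ht) (mem_Ioi.mpr hu) htu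
      have hsq : t ^ 2 ≤ u ^ 2 := pow_le_pow_left₀ ht.le htu 2
      have hmul : f t / t ^ 3 * t ^ 2 ≤ f u / u ^ 3 * u ^ 2 :=
        mul_le_mul hrm hsq (sq_nonneg t) (hr0 u hu)
      have h4 : t ^ 4 ≤ u ^ 4 := pow_le_pow_left₀ ht.le htu 4
      rw [hval t ht hta, hval u hu h]
      have e1 : (f t + t ^ 5) / t = f t / t ^ 3 * t ^ 2 + t ^ 4 := by
        field_simp
      have e2 : (f u + u ^ 5) / u = f u / u ^ 3 * u ^ 2 + u ^ 4 := by
        field_simp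
      rw [e1, e2]; linarith
    · have hu' : ftil u / u = α / k := by
        rw [hftil, if_neg (not_le.mpr h), mul_div_assoc, div_self hu.ne', mul_one]
      rw [hu']
      rcases le_or_gt t a' with ht' | ht'
      · exact hq t ht ht'
      · rw [hftil, if_neg (not_le.mpr ht'), mul_div_assoc, div_self ht.ne', mul_one]
  -- overall bound
  have hqb : ∀ t, 0 < t → ftil t / t ≤ α / k := by
    intro t ht
    rcases le_or_gt t a' with h | h
    · exact hq t ht h
    · rw [hftil, if_neg (not_le.mpr h), mul_div_assoc, div_self ht.ne', mul_one]
  intro s hs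
  have hsne : s ≠ 0 := hs.ne'
  have hint1 : IntervalIntegrable ftil volume 0 s := hcont.intervalIntegrable 0 s
  have hint2 : IntervalIntegrable (fun x => ftil s / s * x) volume 0 s :=
    (continuous_const.mul continuous_id).intervalIntegrable 0 s
  -- positivity of Ftil
  have hFpos : 0 < Ftil s := by
    rw [hFtil]
    refine intervalIntegral.intervalIntegral_pos_of_pos_on hint1 ?_ hs
    intro x hx
    exact hpos x hx.1
  -- main integral inequality
  have hineq : Ftil s ≤ ftil s / s * (s ^ 2 / 2) := by
    rw [hFtil]
    have hmono := intervalIntegral.integral_mono_on hs.le hint1 hint2 ?_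
    · calc ∫ τ in (0:ℝ)..s, ftil τ ≤ ∫ x in (0:ℝ)..s, ftil s / s * x := hmono
        _ = ftil s / s * (s ^ 2 / 2) := by
          rw [intervalIntegral.integral_const_mul, integral_id]
          ring
    · intro x hx
      rcases eq_or_lt_of_le hx.1 with h | h
      · rw [← h, hzero, mul_zero]
      · have := hqm x s h hx.2
        have hx0 : 0 < x := h
        calc ftil x = ftil x / x * x := by field_simp
          _ ≤ ftil s / s * x := by
            exact mul_le_mul_of_nonneg_right this hx0.le
  have hfs : 0 < ftil s := hpos s hs
  refine ⟨by linarith, ?_, ?_⟩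
  · have : ftil s / s * (s ^ 2 / 2) = ftil s * s / 2 := by
      field_simp
    rw [this] at hineq
    linarith
  · have := hqb s hs
    calc ftil s * s = ftil s / s * s ^ 2 := by field_simp
      _ ≤ α / k * s ^ 2 := mul_le_mul_of_nonneg_right this (sq_nonneg s)
end
end

section
/- Let f : ℝ → ℝ satisfy f(s) = 0 for s ≤ 0, f continuous, (f1) f(s)/s³ → 0 as s → 0⁺, and (f2) s ↦ f(s)/s³ strictly increasing on (0,∞). Then for every α > 0 and k > 0 there exists a unique a' > 0 such that f(a') + (a')⁵ = (α/k)·a'. -/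
open MeasureTheory Real Set Filter Topology Metric

noncomputable section

theorem truncation_point_exists_unique
    (f : ℝ → ℝ) (hf0 : ∀ s ≤ (0:ℝ), f s = 0) (hfc : Continuous f)
    (hf1 : Tendsto (fun s => f s / s ^ 3) (𝓝[>] 0) (𝓝 0))
    (hf2 : StrictMonoOn (fun s => f s / s ^ 3) (Ioi 0))
    (α k : ℝ) (hα : 0 < α) (hk : 0 < k) :
    ∃! s : ℝ, 0 < s ∧ f s + s ^ 5 = α / k * s := by
  set c := α / k with hc
  have hcpos : 0 < c := div_pos hα hk
  have hnn : ∀ s ∈ Ioi (0:ℝ), 0 ≤ f s / s ^ 3 := by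
    intro s hs
    refine le_of_tendsto hf1 ?_
    filter_upwards [Ioo_mem_nhdsGT hs] with t ht
    exact (hf2 ht.1 hs ht.2).le
  set h : ℝ → ℝ := fun s => f s / s ^ 3 * s ^ 2 + s ^ 4 with hh
  have hmono : StrictMonoOn h (Ioi 0) := by
    intro x hx y hy hxy
    have hx0 : (0:ℝ) < x := hx
    have hy0 : (0:ℝ) < y := hy
    have h1 : f x / x ^ 3 * x ^ 2 ≤ f x / x ^ 3 * y ^ 2 :=
      mul_le_mul_of_nonneg_left (by nlinarith) (hnn x hx)
    have h2 : f x / x ^ 3 * y ^ 2 < f y / y ^ 3 * y ^ 2 :=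
      mul_lt_mul_of_pos_right (hf2 hx hy hxy) (by positivity)
    have h3 : x ^ 4 < y ^ 4 := pow_lt_pow_left₀ hxy hx0.le (by norm_num)
    simp only [hh]
    linarith
  have hmul : ∀ s : ℝ, s ≠ 0 → h s * s = f s + s ^ 5 := by
    intro s hs
    simp only [hh]
    field_simp
  have key : ∀ s : ℝ, 0 < s → (f s + s ^ 5 = c * s ↔ h s = c) := by
    intro s hs
    rw [← hmul s hs.ne']
    constructor
    · intro heq; exact mul_right_cancel₀ hs.ne' heq
    · intro heq; rw [heq]
  -- h tends to 0 at 0⁺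
  have htend : Tendsto h (𝓝[>] 0) (𝓝 0) := by
    have h2 : Tendsto (fun s : ℝ => s ^ 2) (𝓝[>] 0) (𝓝 0) := by
      have := ((continuous_pow 2).tendsto (0:ℝ)).mono_left (nhdsWithin_le_nhds (s := Ioi 0))
      simpa using this
    have h4 : Tendsto (fun s : ℝ => s ^ 4) (𝓝[>] 0) (𝓝 0) := by
      have := ((continuous_pow 4).tendsto (0:ℝ)).mono_left (nhdsWithin_le_nhds (s := Ioi 0))
      simpa using this
    have := (hf1.mul h2).add h4
    simpa using this
  -- find small ε with h ε < c
  obtain ⟨ε, hεc, hε0⟩ : ∃ ε : ℝ, h ε < c ∧ ε ∈ Ioi (0:ℝ) :=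
    ((htend.eventually (gt_mem_nhds hcpos)).and self_mem_nhdsWithin).exists
  have hε0' : (0:ℝ) < ε := hε0
  -- big M
  set M : ℝ := max (ε + 1) (c + 1) with hM
  have hMε : ε < M := lt_of_lt_of_le (by linarith) (le_max_left _ _)
  have hMc : c + 1 ≤ M := le_max_right _ _
  have hM1 : (1:ℝ) ≤ M := by linarith
  have hM0 : (0:ℝ) < M := by linarith
  have hfM : 0 ≤ f M := by
    have h1 := hnn M hM0
    have h3 : (0:ℝ) < M ^ 3 := by positivity
    have h2 : f M = f M / M ^ 3 * M ^ 3 := by field_simp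
    rw [h2]
    exact mul_nonneg h1 h3.le
  set φ : ℝ → ℝ := fun s => f s + s ^ 5 - c * s with hφ
  have hφε : φ ε < 0 := by
    have := hmul ε hε0'.ne'
    have : f ε + ε ^ 5 = h ε * ε := this.symm
    simp only [hφ]
    nlinarith [hεc, hε0']
  have hφM : 0 < φ M := by
    simp only [hφ]
    have h4 : M ≤ M ^ 4 := le_self_pow₀ hM1 (by norm_num)
    nlinarith [mul_pos hM0 (show (0:ℝ) < M ^ 4 - c by linarith), hfM]
  have hφcont : ContinuousOn φ (Icc ε M) :=
    (((hfc.add (continuous_pow 5)).sub (continuous_const.mul continuous_id')).continuousOn)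
  have hsub := intermediate_value_Ioo hMε.le hφcont
  have h0mem : (0:ℝ) ∈ Ioo (φ ε) (φ M) := ⟨hφε, hφM⟩
  obtain ⟨s, hsmem, hs0⟩ := hsub h0mem
  have hspos : 0 < s := lt_trans hε0' hsmem.1
  have hseq : f s + s ^ 5 = c * s := by
    have : f s + s ^ 5 - c * s = 0 := hs0
    linarith
  refine ⟨s, ⟨hspos, hseq⟩, ?_⟩
  rintro t ⟨htpos, hteq⟩
  have h1 : h t = c := (key t htpos).mp hteq
  have h2 : h s = c := (key s hspos).mp hseq
  exact hmono.injOn htpos hspos (by rw [h1, h2])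
end
end

section
/- Let a, b, S > 0 and let l₁ > 0, l₂ ≥ 0 satisfy l₁ ≥ a·S·(l₁+l₂)^{1/3} and l₂ ≥ b·S²·(l₁+l₂)^{2/3}. Then (l₁+l₂)^{1/3} ≥ (b·S² + (b²S⁴ + 4aS)^{1/2})/2, and consequently (1/3)l₁ + (1/12)l₂ ≥ (1/4)abS³ + (1/24)b³S⁶ + (1/24)(b²S⁴ + 4aS)^{3/2}. -/
open Real

theorem threshold_lower_bound
    (a b S l₁ l₂ : ℝ) (ha : 0 < a) (hb : 0 < b) (hS : 0 < S)
    (hl1 : 0 < l₁) (hl2 : 0 ≤ l₂)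
    (h1 : a * S * (l₁ + l₂) ^ ((1:ℝ) / 3) ≤ l₁)
    (h2 : b * S ^ 2 * (l₁ + l₂) ^ ((2:ℝ) / 3) ≤ l₂) :
    (b * S ^ 2 + (b ^ 2 * S ^ 4 + 4 * a * S) ^ ((1:ℝ) / 2)) / 2
        ≤ (l₁ + l₂) ^ ((1:ℝ) / 3) ∧
    1 / 4 * a * b * S ^ 3 + 1 / 24 * b ^ 3 * S ^ 6
        + 1 / 24 * (b ^ 2 * S ^ 4 + 4 * a * S) ^ ((3:ℝ) / 2)
      ≤ 1 / 3 * l₁ + 1 / 12 * l₂ := by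
  have hL : (0:ℝ) < l₁ + l₂ := by linarith
  set t : ℝ := (l₁ + l₂) ^ ((1:ℝ) / 3) with htdef
  have ht : 0 < t := Real.rpow_pos_of_pos hL _
  have ht3 : t ^ 3 = l₁ + l₂ := by
    rw [htdef, ← Real.rpow_natCast (_ ^ _) 3, ← Real.rpow_mul hL.le]
    norm_num
  have ht2 : (l₁ + l₂) ^ ((2:ℝ) / 3) = t ^ 2 := by
    rw [htdef, ← Real.rpow_natCast (_ ^ _) 2, ← Real.rpow_mul hL.le]
    norm_num
  rw [ht2] at h2
  have hx : (0:ℝ) ≤ b ^ 2 * S ^ 4 + 4 * a * S := by positivity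
  set D : ℝ := (b ^ 2 * S ^ 4 + 4 * a * S) ^ ((1:ℝ) / 2) with hDdef
  have hD0 : 0 ≤ D := Real.rpow_nonneg hx _
  have hD2 : D ^ 2 = b ^ 2 * S ^ 4 + 4 * a * S := by
    rw [hDdef, ← Real.rpow_natCast (_ ^ _) 2, ← Real.rpow_mul hx]
    norm_num
  have hD3 : (b ^ 2 * S ^ 4 + 4 * a * S) ^ ((3:ℝ) / 2) = D ^ 3 := by
    rw [hDdef, ← Real.rpow_natCast (_ ^ _) 3, ← Real.rpow_mul hx]
    norm_num
  -- key: t^2 ≥ a*S + b*S^2*t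
  have hkey : a * S + b * S ^ 2 * t ≤ t ^ 2 := by
    have h3 : a * S * t + b * S ^ 2 * t ^ 2 ≤ t ^ 3 := by rw [ht3]; linarith
    nlinarith [mul_pos ht ht]
  have part1 : (b * S ^ 2 + D) / 2 ≤ t := by
    nlinarith [sq_nonneg (2 * t - b * S ^ 2 - D), sq_nonneg (2 * t - b * S ^ 2 + D),
      mul_pos ha hS, mul_pos hb (pow_pos hS 2), mul_pos ht ht]
  refine ⟨part1, ?_⟩
  rw [hD3]
  have hl1' : a * S * t ≤ l₁ := h1
  have hl2' : b * S ^ 2 * t ^ 2 ≤ l₂ := h2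
  nlinarith [mul_pos ha hS, mul_pos hb (pow_pos hS 2), hD2, hD0, part1, ht,
    mul_nonneg (mul_nonneg ha.le hS.le) (sub_nonneg.2 part1),
    mul_nonneg (mul_nonneg hb.le (pow_pos hS 2).le)
      (mul_nonneg (sub_nonneg.2 part1) (by nlinarith : (0:ℝ) ≤ t + (b * S ^ 2 + D) / 2))]
end

section
/- Let a, b, α > 0 and k > 2, let f : ℝ → ℝ satisfy f(s) = 0 for s ≤ 0, f continuous, (f1) f(s)/s³ → 0 as s → 0⁺ and (f2) s ↦ f(s)/s³ strictly increasing on (0,∞), and let a' > 0 satisfy f(a') + (a')⁵ = (α/k)·a'. Let W : ℝ³ → ℝ be measurable with W(z) ≥ α for all z. Suppose w : ℝ³ → ℝ is twice continuously differentiable, w ≥ 0, w ≢ 0, w and |∇w| are square-integrable, w(z) → 0 as |z| → ∞, and w satisfies pointwise −(a + b∫_{ℝ³}|∇w|² dz)Δw(z) + W(z)w(z) = f(w(z)) + w(z)⁵ for all z ∈ ℝ³. Then sup_{z ∈ ℝ³} w(z) ≥ a'. -/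
open MeasureTheory Real Set Filter Topology Metric

noncomputable section

/-- The Laplacian of `u : ℝ³ → ℝ`, as the sum of second partial derivatives. -/
def lap (u : E3 → ℝ) (z : E3) : ℝ :=
  ∑ i : Fin 3,
    fderiv ℝ (fun y => fderiv ℝ u y (EuclideanSpace.single i (1:ℝ))) z
      (EuclideanSpace.single i (1:ℝ))

/-!
At a maximum point `z₀` of `w` the Laplacian is nonpositive, so the equation and `W ≥ α` give
`α ≤ (f s + s⁵) / s` for `s = w z₀ > 0`. By (f1) and (f2), `s ↦ (f s + s⁵) / s` is strictly
increasing on `(0, ∞)`, and it equals `α / k < α` at `a'`; hence `s ≥ a'`.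
-/

theorem MonotoneOn.le_of_tendsto_nhdsGT {α β : Type*} [LinearOrder α] [TopologicalSpace α]
    [OrderTopology α] [DenselyOrdered α] [NoMaxOrder α] [Preorder β] [TopologicalSpace β]
    [ClosedIicTopology β] {φ : α → β} {a s : α} {L : β} (hφ : MonotoneOn φ (Ioi a))
    (hL : Tendsto φ (𝓝[>] a) (𝓝 L)) (hs : a < s) : L ≤ φ s :=
  le_of_tendsto hL <| by
    filter_upwards [Ioo_mem_nhdsGT hs] with t ht using hφ ht.1 hs ht.2.le

theorem strictMonoOn_add_pow_five_div_self {f : ℝ → ℝ}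
    (hf1 : Tendsto (fun s => f s / s ^ 3) (𝓝[>] 0) (𝓝 0))
    (hf2 : StrictMonoOn (fun s => f s / s ^ 3) (Ioi 0)) :
    StrictMonoOn (fun s => (f s + s ^ 5) / s) (Ioi 0) := by
  intro s hs t ht hst
  have hfs : 0 ≤ f s / s ^ 3 := hf2.monotoneOn.le_of_tendsto_nhdsGT hf1 hs
  have factor : ∀ r : ℝ, r ≠ 0 → (f r + r ^ 5) / r = r ^ 2 * (f r / r ^ 3 + r ^ 2) := by
    intro r hr
    field_simp
  rw [mem_Ioi] at hs ht
  show (f s + s ^ 5) / s < (f t + t ^ 5) / t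
  rw [factor s hs.ne', factor t ht.ne']
  exact mul_lt_mul'' (pow_lt_pow_left₀ hst hs.le two_ne_zero)
    (add_lt_add (hf2 hs ht hst) (pow_lt_pow_left₀ hst hs.le two_ne_zero))
    (by positivity) (by positivity)

/-- By the second-derivative test, `g'' x > 0` would make `x` a local minimum as well, so `g`
would be locally constant and `g'' x = 0`. -/
theorem IsLocalMax.deriv_deriv_nonpos {g : ℝ → ℝ} {x : ℝ} (h : IsLocalMax g x)
    (hc : ContinuousAt g x) : deriv (deriv g) x ≤ 0 := by
  by_contra! hpos
  have hmin : IsLocalMin g x := isLocalMin_of_deriv_deriv_pos hpos h.deriv_eq_zero hc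
  have hconst : g =ᶠ[𝓝 x] fun _ => g x := by
    filter_upwards [h, hmin] with y hmax hmin using le_antisymm hmax hmin
  have : deriv (deriv g) x = 0 := by
    rw [hconst.deriv.deriv_eq]
    simp
  exact hpos.ne' this

section SecondDirectionalDerivative

variable {E F : Type*} [NormedAddCommGroup E] [NormedSpace ℝ E]
  [NormedAddCommGroup F] [NormedSpace ℝ F]

theorem hasDerivAt_add_smul (z v : E) (t : ℝ) : HasDerivAt (fun t : ℝ => z + t • v) v t := by
  simpa using ((hasDerivAt_id t).smul_const v).const_add z

theorem deriv_deriv_apply_add_smul {u : E → F} {z v : E} (hu : Differentiable ℝ u)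
    (hu' : DifferentiableAt ℝ (fun y => fderiv ℝ u y v) z) :
    deriv (deriv fun t : ℝ => u (z + t • v)) 0 = fderiv ℝ (fun y => fderiv ℝ u y v) z v := by
  have hderiv : deriv (fun t : ℝ => u (z + t • v)) = fun t => fderiv ℝ u (z + t • v) v :=
    funext fun t => ((hu _).hasFDerivAt.comp_hasDerivAt t (hasDerivAt_add_smul z v t)).deriv
  rw [hderiv]
  exact (hu'.hasFDerivAt.comp_hasDerivAt_of_eq (0 : ℝ) (hasDerivAt_add_smul z v 0)
    (by simp)).deriv

theorem IsLocalMax.fderiv_fderiv_apply_nonpos {u : E → ℝ} {z : E} (hu : ContDiff ℝ 2 u)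
    (h : IsLocalMax u z) (v : E) : fderiv ℝ (fun y => fderiv ℝ u y v) z v ≤ 0 := by
  have hcont : Continuous fun t : ℝ => z + t • v := by fun_prop
  have hline : IsLocalMax (fun t : ℝ => u (z + t • v)) 0 :=
    IsLocalMax.comp_continuous (g := fun t : ℝ => z + t • v) (by simpa using h) hcont.continuousAt
  have hu' : Differentiable ℝ (fun y => fderiv ℝ u y v) :=
    ((hu.fderiv_right (by norm_num)).clm_apply contDiff_const).differentiable one_ne_zero
  rw [← deriv_deriv_apply_add_smul (hu.differentiable (by norm_num)) (hu' z)]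
  exact hline.deriv_deriv_nonpos (hu.continuous.comp hcont).continuousAt

end SecondDirectionalDerivative

theorem lap_nonpos_of_isLocalMax {u : E3 → ℝ} {z : E3} (hu : ContDiff ℝ 2 u)
    (h : IsLocalMax u z) : lap u z ≤ 0 :=
  Finset.sum_nonpos fun _ _ => h.fderiv_fderiv_apply_nonpos hu _

theorem Continuous.exists_pos_forall_le_of_tendsto_cocompact {X : Type*} [TopologicalSpace X]
    {u : X → ℝ} (hu : Continuous u) (hdecay : Tendsto u (cocompact X) (𝓝 0)) {x : X}
    (hx : 0 < u x) : ∃ z, 0 < u z ∧ ∀ y, u y ≤ u z := by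
  obtain ⟨z, hz⟩ := hu.exists_forall_ge' x (hdecay.eventually (eventually_le_nhds hx))
  exact ⟨z, hx.trans_le (hz x), hz⟩

theorem sup_of_solution_at_least_aprime_general
    (a b α k : ℝ) (ha : 0 < a) (hb : 0 < b) (hα : 0 < α) (hk : 2 < k)
    (f : ℝ → ℝ)
    (hf1 : Tendsto (fun s => f s / s ^ 3) (𝓝[>] 0) (𝓝 0))
    (hf2 : StrictMonoOn (fun s => f s / s ^ 3) (Ioi 0))
    (a' : ℝ) (ha' : 0 < a') (heq : f a' + a' ^ 5 = α / k * a')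
    (W : E3 → ℝ) (hWα : ∀ z, α ≤ W z)
    (w : E3 → ℝ) (hwC2 : ContDiff ℝ 2 w) (hwnn : ∀ z, 0 ≤ w z) (hwne : w ≠ 0)
    (hwdecay : Tendsto w (Filter.cocompact E3) (𝓝 0))
    (hweq : ∀ z : E3,
      -((a + b * ∫ y : E3, ‖gradient w y‖ ^ 2) * lap w z) + W z * w z
        = f (w z) + (w z) ^ 5) :
    a' ≤ ⨆ z : E3, w z := by
  obtain ⟨x, hx⟩ : ∃ x, 0 < w x := by
    by_contra! h
    exact hwne (funext fun z => le_antisymm (h z) (hwnn z))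
  obtain ⟨z₀, hpos, hmax⟩ := hwC2.continuous.exists_pos_forall_le_of_tendsto_cocompact hwdecay hx
  refine le_trans ?_ (le_ciSup ⟨w z₀, forall_mem_range.2 hmax⟩ z₀)
  have hlap : lap w z₀ ≤ 0 :=
    lap_nonpos_of_isLocalMax hwC2 (IsMaxOn.isLocalMax (fun y _ => hmax y) univ_mem)
  have hcoeff : 0 < a + b * ∫ y : E3, ‖gradient w y‖ ^ 2 := by
    have : 0 ≤ ∫ y : E3, ‖gradient w y‖ ^ 2 := integral_nonneg fun y => sq_nonneg _
    positivity
  have hαs : α ≤ (f (w z₀) + w z₀ ^ 5) / w z₀ := by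
    rw [le_div_iff₀ hpos, ← hweq z₀]
    nlinarith [hWα z₀, mul_nonneg hcoeff.le (neg_nonneg.2 hlap)]
  by_contra! hlt
  have hmono : (f (w z₀) + w z₀ ^ 5) / w z₀ < (f a' + a' ^ 5) / a' :=
    strictMonoOn_add_pow_five_div_self hf1 hf2 hpos ha' hlt
  have hαk : (f a' + a' ^ 5) / a' < α := by
    rw [heq, mul_div_assoc, div_self ha'.ne', mul_one]
    exact div_lt_self hα (by linarith)
  linarith

theorem sup_of_solution_at_least_aprime
    (a b α k : ℝ) (ha : 0 < a) (hb : 0 < b) (hα : 0 < α) (hk : 2 < k)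
    (f : ℝ → ℝ) (hf0 : ∀ s ≤ (0:ℝ), f s = 0) (hfc : Continuous f)
    (hf1 : Tendsto (fun s => f s / s ^ 3) (𝓝[>] 0) (𝓝 0))
    (hf2 : StrictMonoOn (fun s => f s / s ^ 3) (Ioi 0))
    (a' : ℝ) (ha' : 0 < a') (heq : f a' + a' ^ 5 = α / k * a')
    (W : E3 → ℝ) (hWmeas : Measurable W) (hWα : ∀ z, α ≤ W z)
    (w : E3 → ℝ) (hwC2 : ContDiff ℝ 2 w) (hwnn : ∀ z, 0 ≤ w z) (hwne : w ≠ 0)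
    (hw2 : Integrable (fun z : E3 => (w z) ^ 2))
    (hwg2 : Integrable (fun z : E3 => ‖gradient w z‖ ^ 2))
    (hwdecay : Tendsto w (Filter.cocompact E3) (𝓝 0))
    (hweq : ∀ z : E3,
      -((a + b * ∫ y : E3, ‖gradient w y‖ ^ 2) * lap w z) + W z * w z
        = f (w z) + (w z) ^ 5) :
    a' ≤ ⨆ z : E3, w z :=
  sup_of_solution_at_least_aprime_general a b α k ha hb hα hk f hf1 hf2 a' ha' heq W hWα w hwC2 hwnn
    hwne hwdecay hweq
end
end

section
/- Let a, b, S > 0, let 0 < χ ≤ 1, and let μ, ν > 0 satisfy a·μ + b·μ² ≤ χ·ν and S·ν^{1/3} ≤ μ. Then (1/4)a·μ + (1/12)χ·ν ≥ (1/4)abS³ + (1/24)b³S⁶ + (1/24)(b²S⁴ + 4aS)^{3/2}. -/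
open Real

theorem concentration_energy_lower_bound
    (a b S χ μ ν : ℝ) (ha : 0 < a) (hb : 0 < b) (hS : 0 < S)
    (hχ0 : 0 < χ) (hχ1 : χ ≤ 1) (hμ : 0 < μ) (hν : 0 < ν)
    (h1 : a * μ + b * μ ^ 2 ≤ χ * ν)
    (h2 : S * ν ^ ((1:ℝ) / 3) ≤ μ) :
    1 / 4 * a * b * S ^ 3 + 1 / 24 * b ^ 3 * S ^ 6
        + 1 / 24 * (b ^ 2 * S ^ 4 + 4 * a * S) ^ ((3:ℝ) / 2)
      ≤ 1 / 4 * a * μ + 1 / 12 * χ * ν := by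
  have hχν : a * μ + b * μ ^ 2 ≤ ν := le_trans h1 (by nlinarith)
  have hν13 : (0:ℝ) ≤ ν ^ ((1:ℝ)/3) := Real.rpow_nonneg hν.le _
  have hcube : (ν ^ ((1:ℝ)/3)) ^ (3:ℕ) = ν := by
    rw [← Real.rpow_natCast (ν ^ ((1:ℝ)/3)) 3, ← Real.rpow_mul hν.le]
    norm_num
  have hμ3 : S ^ 3 * ν ≤ μ ^ 3 := by
    calc S ^ 3 * ν = (S * ν ^ ((1:ℝ)/3)) ^ 3 := by rw [mul_pow, hcube]
    _ ≤ μ ^ 3 := pow_le_pow_left₀ (by positivity) h2 3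
  have hstep : S ^ 3 * (a * μ + b * μ ^ 2) ≤ μ ^ 3 :=
    le_trans (mul_le_mul_of_nonneg_left hχν (by positivity)) hμ3
  have hkey : b * S ^ 3 * μ + a * S ^ 3 ≤ μ ^ 2 := by nlinarith [hμ, hstep]
  set E : ℝ := Real.sqrt (b ^ 2 * S ^ 4 + 4 * a * S) with hEdef
  have hx : (0:ℝ) ≤ b ^ 2 * S ^ 4 + 4 * a * S := by positivity
  have hE0 : 0 ≤ E := Real.sqrt_nonneg _
  have hE2 : E ^ 2 = b ^ 2 * S ^ 4 + 4 * a * S := Real.sq_sqrt hx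
  have hS2E2 : (S * E) ^ 2 = b ^ 2 * S ^ 6 + 4 * a * S ^ 3 := by
    rw [mul_pow, hE2]; ring
  have hSE : b * S ^ 3 ≤ S * E := by
    have h' : (b * S ^ 3) ^ 2 ≤ (S * E) ^ 2 := by nlinarith [mul_pos ha (pow_pos hS 3)]
    calc b * S ^ 3 = √((b * S ^ 3) ^ 2) := (Real.sqrt_sq (by positivity)).symm
      _ ≤ √((S * E) ^ 2) := Real.sqrt_le_sqrt h'
      _ = S * E := Real.sqrt_sq (by positivity)
  have hpos : 0 < 2 * μ - b * S ^ 3 + S * E := by nlinarith [hSE, hμ]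
  have hμ0 : (b * S ^ 3 + S * E) / 2 ≤ μ := by
    nlinarith [hkey, hS2E2, hpos]
  have h32 : (b ^ 2 * S ^ 4 + 4 * a * S) ^ ((3:ℝ)/2) = E ^ 3 := by
    rw [hEdef, Real.sqrt_eq_rpow, ← Real.rpow_natCast ((b ^ 2 * S ^ 4 + 4 * a * S) ^ ((1:ℝ)/2)) 3,
      ← Real.rpow_mul hx]
    norm_num
  rw [h32]
  have hE3 : E ^ 3 = (b ^ 2 * S ^ 4 + 4 * a * S) * E := by
    rw [← hE2]; ring
  nlinarith [h1, mul_le_mul_of_nonneg_left hkey hb.le,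
    mul_le_mul_of_nonneg_left hμ0 (by positivity : (0:ℝ) ≤ 4 * a + b ^ 2 * S ^ 3),
    hE3]
end

section
/- Let f : ℝ → ℝ satisfy f(s) = 0 for s ≤ 0, f continuous, (f1) f(s)/s³ → 0 as s → 0⁺, (f2) s ↦ f(s)/s³ strictly increasing on (0,∞), and (f4) f(s) ≤ C(1 + s^{q−1}) for all s > 0 with some C > 0 and 4 < q < 6. Let w : ℝ³ → ℝ be continuous, everywhere positive, and square-integrable with ∫_{ℝ³} w⁶ dz < ∞. Let A > 0 and B ≥ 0 be real numbers such that A + B = ∫_{ℝ³}(f(w(z))·w(z) + w(z)⁶) dz. If T > 0 satisfies T·A + T³·B = ∫_{ℝ³}(f(T·w(z))·w(z) + T⁵·w(z)⁶) dz, then T = 1. -/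
open MeasureTheory Real Set Filter Topology Metric

noncomputable section

/-!
Since `s ↦ f s / s ^ 3` is increasing,
`f (T s) - T³ f s = (T s)³ (f (T s) / (T s)³ - f s / s³)` has the sign of `T - 1`.
Subtracting `T³` times the first identity from the second gives
`T (1 - T²) (A + T² ∫ w⁶) = ∫ (f (T w) - T³ f w) w`,
whose two sides have opposite signs unless `T = 1`.
The growth bounds on `f` only serve to make the integrals finite.
-/

section DivCube

variable {f : ℝ → ℝ}

theorem nonneg_of_tendsto_div_cube_of_monotoneOn
    (hlim : Tendsto (fun s => f s / s ^ 3) (𝓝[>] 0) (𝓝 0))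
    (hmono : MonotoneOn (fun s => f s / s ^ 3) (Ioi 0)) {s : ℝ} (hs : 0 < s) : 0 ≤ f s := by
  have hquot : 0 ≤ f s / s ^ 3 := by
    refine le_of_tendsto hlim ?_
    filter_upwards [Ioo_mem_nhdsGT hs] with t ht
    exact hmono ht.1 hs ht.2.le
  simpa using (le_div_iff₀ (pow_pos hs 3)).1 hquot

theorem sub_one_mul_sub_cube_mul_nonneg (hmono : MonotoneOn (fun s => f s / s ^ 3) (Ioi 0))
    {s T : ℝ} (hs : 0 < s) (hT : 0 < T) : 0 ≤ (T - 1) * (f (T * s) - T ^ 3 * f s) := by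
  have hTs : 0 < T * s := mul_pos hT hs
  have key : f (T * s) - T ^ 3 * f s =
      (T * s) ^ 3 * (f (T * s) / (T * s) ^ 3 - f s / s ^ 3) := by
    field_simp
  rw [key]
  rcases le_total T 1 with hT1 | hT1
  · have := hmono hTs hs (by nlinarith)
    exact mul_nonneg_of_nonpos_of_nonpos (by linarith)
      (mul_nonpos_of_nonneg_of_nonpos (by positivity) (by linarith))
  · have := hmono hs hTs (by nlinarith)
    exact mul_nonneg (by linarith) (mul_nonneg (by positivity) (by linarith))

theorem exists_abs_le_mul_cube_add_pow_five (hnn : ∀ s > 0, 0 ≤ f s)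
    (hmono : MonotoneOn (fun s => f s / s ^ 3) (Ioi 0)) {C q : ℝ} (hC : 0 ≤ C) (hq1 : 1 ≤ q)
    (hq6 : q ≤ 6) (hfq : ∀ s > 0, f s ≤ C * (1 + s ^ (q - 1))) :
    ∃ M, ∀ s > 0, |f s| ≤ M * (s ^ 3 + s ^ 5) := by
  refine ⟨max (f 1) (2 * C), fun s hs => ?_⟩
  rw [abs_of_nonneg (hnn s hs)]
  have hM : 0 ≤ max (f 1) (2 * C) := le_max_of_le_right (by linarith)
  rcases le_total s 1 with hs1 | hs1
  · have hquot := hmono hs (mem_Ioi.2 one_pos) hs1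
    simp only [one_pow, div_one] at hquot
    calc f s ≤ f 1 * s ^ 3 := (div_le_iff₀ (pow_pos hs 3)).1 hquot
      _ ≤ max (f 1) (2 * C) * (s ^ 3 + s ^ 5) :=
        mul_le_mul (le_max_left _ _) (by nlinarith [pow_pos hs 5]) (by positivity) hM
  · have h1 : 1 ≤ s ^ (q - 1) := one_le_rpow hs1 (by linarith)
    have h5 : s ^ (q - 1) ≤ s ^ 5 := by
      rw [← rpow_natCast]
      exact rpow_le_rpow_of_exponent_le hs1 (by norm_num; linarith)
    calc f s ≤ C * (1 + s ^ (q - 1)) := hfq s hs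
      _ ≤ 2 * C * s ^ 5 := by nlinarith
      _ ≤ max (f 1) (2 * C) * (s ^ 3 + s ^ 5) :=
        mul_le_mul (le_max_right _ _) (by nlinarith [pow_pos hs 3]) (by positivity) hM

end DivCube

theorem integrable_comp_mul_mul {X : Type*} [MeasurableSpace X] {μ : Measure X} {f : ℝ → ℝ}
    {w : X → ℝ} {M t : ℝ} (hfc : Continuous f) (hf : ∀ s > 0, |f s| ≤ M * (s ^ 3 + s ^ 5))
    (hw : AEStronglyMeasurable w μ) (hwpos : ∀ x, 0 < w x)
    (hw2 : Integrable (fun x => w x ^ 2) μ) (hw6 : Integrable (fun x => w x ^ 6) μ)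
    (ht : 0 < t) : Integrable (fun x => f (t * w x) * w x) μ := by
  refine Integrable.mono'
    (((hw2.add hw6).const_mul (M * t ^ 3)).add (hw6.const_mul (M * t ^ 5)))
    ((hfc.comp_aestronglyMeasurable (hw.const_mul t)).mul hw) (ae_of_all _ fun x => ?_)
  have hs := hwpos x
  have hM : 0 ≤ M := by
    have := (abs_nonneg _).trans (hf (t * w x) (mul_pos ht hs))
    exact nonneg_of_mul_nonneg_left this (by positivity)
  have h4 : w x ^ 4 ≤ w x ^ 2 + w x ^ 6 := by nlinarith [sq_nonneg (w x - w x ^ 3)]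
  calc ‖f (t * w x) * w x‖ = |f (t * w x)| * w x := by
        rw [norm_mul, norm_eq_abs, norm_of_nonneg hs.le]
    _ ≤ M * ((t * w x) ^ 3 + (t * w x) ^ 5) * w x :=
      mul_le_mul_of_nonneg_right (hf _ (mul_pos ht hs)) hs.le
    _ = M * t ^ 3 * w x ^ 4 + M * t ^ 5 * w x ^ 6 := by ring
    _ ≤ M * t ^ 3 * (w x ^ 2 + w x ^ 6) + M * t ^ 5 * w x ^ 6 := by gcongr

theorem sub_one_mul_integral_sub_nonneg {X : Type*} [MeasurableSpace X] {μ : Measure X}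
    {f : ℝ → ℝ} {w : X → ℝ} {T : ℝ} (hmono : MonotoneOn (fun s => f s / s ^ 3) (Ioi 0))
    (hwpos : ∀ x, 0 < w x) (hT : 0 < T) (hiT : Integrable (fun x => f (T * w x) * w x) μ)
    (hi1 : Integrable (fun x => f (w x) * w x) μ) :
    0 ≤ (T - 1) * ((∫ x, f (T * w x) * w x ∂μ) - T ^ 3 * ∫ x, f (w x) * w x ∂μ) := by
  rw [← integral_const_mul, ← integral_sub hiT (hi1.const_mul _), ← integral_const_mul]
  refine integral_nonneg fun x => ?_
  calc 0 ≤ (T - 1) * (f (T * w x) - T ^ 3 * f (w x)) * w x :=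
        mul_nonneg (sub_one_mul_sub_cube_mul_nonneg hmono (hwpos x) hT) (hwpos x).le
    _ = (T - 1) * (f (T * w x) * w x - T ^ 3 * (f (w x) * w x)) := by ring

theorem scaling_factor_is_one_general
    (f : ℝ → ℝ) (hfc : Continuous f)
    (hf1 : Tendsto (fun s => f s / s ^ 3) (𝓝[>] 0) (𝓝 0))
    (hf2 : StrictMonoOn (fun s => f s / s ^ 3) (Ioi 0))
    (hf4 : ∃ C > (0:ℝ), ∃ q : ℝ, 4 < q ∧ q < 6 ∧ ∀ s > (0:ℝ), f s ≤ C * (1 + s ^ (q - 1)))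
    (w : E3 → ℝ) (hwc : Continuous w) (hwpos : ∀ z, 0 < w z)
    (hw2 : Integrable (fun z : E3 => (w z) ^ 2))
    (hw6 : Integrable (fun z : E3 => (w z) ^ 6))
    (A B : ℝ) (hA : 0 < A)
    (hAB : A + B = ∫ z : E3, (f (w z) * w z + (w z) ^ 6))
    (T : ℝ) (hT : 0 < T)
    (hTeq : T * A + T ^ 3 * B = ∫ z : E3, (f (T * w z) * w z + T ^ 5 * (w z) ^ 6)) :
    T = 1 := by
  have hmono := hf2.monotoneOn
  have hnn : ∀ s > 0, 0 ≤ f s := fun _ hs =>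
    nonneg_of_tendsto_div_cube_of_monotoneOn hf1 hmono hs
  obtain ⟨C, hC, q, hq4, hq6, hfq⟩ := hf4
  obtain ⟨M, hM⟩ := exists_abs_le_mul_cube_add_pow_five hnn hmono hC.le (by linarith) hq6.le hfq
  have hint : ∀ t > 0, Integrable (fun z : E3 => f (t * w z) * w z) := fun t ht =>
    integrable_comp_mul_mul hfc hM hwc.aestronglyMeasurable hwpos hw2 hw6 ht
  have hint1 : Integrable (fun z : E3 => f (w z) * w z) := by simpa using hint 1 one_pos
  have hsign := sub_one_mul_integral_sub_nonneg hmono hwpos hT (hint T hT) hint1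
  rw [integral_add hint1 hw6] at hAB
  rw [integral_add (hint T hT) (hw6.const_mul _), integral_const_mul] at hTeq
  have hI₂ : 0 < ∫ z : E3, w z ^ 6 := integral_pos_of_integrable_nonneg_nonzero (x := 0)
    (hwc.pow 6) hw6 (fun z => by positivity) (pow_ne_zero _ (hwpos 0).ne')
  have hP : 0 < T * (1 + T) * (A + T ^ 2 * ∫ z : E3, w z ^ 6) := by positivity
  have hsq : (T - 1) ^ 2 * (T * (1 + T) * (A + T ^ 2 * ∫ z : E3, w z ^ 6)) ≤ 0 := by
    linear_combination hsign + (T - 1) * (T ^ 3 * hAB - hTeq)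
  have hsq0 : (T - 1) ^ 2 = 0 := le_antisymm (nonpos_of_mul_nonpos_left hsq hP) (sq_nonneg _)
  exact sub_eq_zero.1 ((pow_eq_zero_iff two_ne_zero).1 hsq0)

theorem scaling_factor_is_one
    (f : ℝ → ℝ) (hf0 : ∀ s ≤ (0:ℝ), f s = 0) (hfc : Continuous f)
    (hf1 : Tendsto (fun s => f s / s ^ 3) (𝓝[>] 0) (𝓝 0))
    (hf2 : StrictMonoOn (fun s => f s / s ^ 3) (Ioi 0))
    (hf4 : ∃ C > (0:ℝ), ∃ q : ℝ, 4 < q ∧ q < 6 ∧ ∀ s > (0:ℝ), f s ≤ C * (1 + s ^ (q - 1)))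
    (w : E3 → ℝ) (hwc : Continuous w) (hwpos : ∀ z, 0 < w z)
    (hw2 : Integrable (fun z : E3 => (w z) ^ 2))
    (hw6 : Integrable (fun z : E3 => (w z) ^ 6))
    (A B : ℝ) (hA : 0 < A) (hB : 0 ≤ B)
    (hAB : A + B = ∫ z : E3, (f (w z) * w z + (w z) ^ 6))
    (T : ℝ) (hT : 0 < T)
    (hTeq : T * A + T ^ 3 * B = ∫ z : E3, (f (T * w z) * w z + T ^ 5 * (w z) ^ 6)) :
    T = 1 :=
  scaling_factor_is_one_general f hfc hf1 hf2 hf4 w hwc hwpos hw2 hw6 A B hA hAB T hT hTeq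
end
end
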